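/- Let B be a real p×q matrix and n ≥ 1. Then (X + 1)^{(n-1)q} divides the characteristic polynomial of C, and (X + 1)^{(n-1)p} divides the characteristic polynomial of D; that is, C has −1 as an eigenvalue with algebraic multiplicity at least (n−1)q, and D has −1 as an eigenvalue with algebraic multiplicity at least (n−1)p. -/

import Mathlib

open Matrix

/-- The matrix `C` of Construction III: indexed by `Fin p ⊕ (Fin n × Fin q)`,
first block row `[0, B, …, B]`, and the `n×n` grid of `q×q` blocks has zero diagonal blocks
and identity blocks `I_q` off the diagonal. -/
def matC3 (p q n : ℕ) (B : Matrix (Fin p) (Fin q) ℝ) :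
    Matrix (Fin p ⊕ Fin n × Fin q) (Fin p ⊕ Fin n × Fin q) ℝ :=
  Matrix.of fun a b =>
    match a, b with
    | Sum.inl i, Sum.inr (_, j) => B i j
    | Sum.inr (_, j), Sum.inl i => B i j
    | Sum.inr (k, j), Sum.inr (k', j') => if k ≠ k' ∧ j = j' then 1 else 0
    | _, _ => 0

/-- The matrix `D` of Construction III: indexed by `Fin q ⊕ (Fin n × Fin p)`,
first block row `[0, Bᵀ, …, Bᵀ]`, and the `n×n` grid of `p×p` blocks has zero diagonal blocks
and identity blocks `I_p` off the diagonal. -/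
def matD3 (p q n : ℕ) (B : Matrix (Fin p) (Fin q) ℝ) :
    Matrix (Fin q ⊕ Fin n × Fin p) (Fin q ⊕ Fin n × Fin p) ℝ :=
  Matrix.of fun a b =>
    match a, b with
    | Sum.inl j, Sum.inr (_, i) => B i j
    | Sum.inr (_, i), Sum.inl j => B i j
    | Sum.inr (k, i), Sum.inr (k', i') => if k ≠ k' ∧ i = i' then 1 else 0
    | _, _ => 0

/-!
The `(k, j)`-column of `C + 1` does not depend on `k`: `C + 1` is obtained from the
`(p + q)`-square matrix `[[1, B], [Bᵀ, 1]]` by repeating rows and columns. Hence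
`rank (C + 1) ≤ p + q`, so the `-1`-eigenspace of `C` has dimension at least `(n - 1) q`, and the
geometric multiplicity of an eigenvalue is at most its algebraic multiplicity. `D` is `C` built
from `Bᵀ`.
-/

open Polynomial

namespace Matrix

variable {ι K : Type*} [Fintype ι] [DecidableEq ι] [Field K]

theorem eigenspace_toLin'_eq_ker (A : Matrix ι ι K) (μ : K) :
    Module.End.eigenspace A.toLin' μ = LinearMap.ker (A - scalar ι μ).mulVecLin := by
  rw [Module.End.eigenspace_def, ← toLin'_apply', map_sub, scalar_apply, ← smul_one_eq_diagonal,
    map_smul, toLin'_one, Module.End.one_eq_id]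

theorem card_sub_rank_le_rootMultiplicity_charpoly (A : Matrix ι ι K) (μ : K) :
    Fintype.card ι - (A - scalar ι μ).rank ≤ A.charpoly.rootMultiplicity μ := by
  have hnullity := LinearMap.finrank_range_add_finrank_ker (A - scalar ι μ).mulVecLin
  rw [Module.finrank_fintype_fun_eq_card] at hnullity
  have hgeom := LinearMap.finrank_eigenspace_le A.toLin' μ
  rw [charpoly_toLin', eigenspace_toLin'_eq_ker] at hgeom
  rw [rank]
  omega

theorem X_sub_C_pow_card_sub_rank_dvd_charpoly (A : Matrix ι ι K) (μ : K) :
    (X - C μ) ^ (Fintype.card ι - (A - scalar ι μ).rank) ∣ A.charpoly :=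
  (pow_dvd_pow _ (A.card_sub_rank_le_rootMultiplicity_charpoly μ)).trans
    (pow_rootMultiplicity_dvd _ _)

end Matrix

theorem matC3_add_one_eq_submatrix (p q n : ℕ) (B : Matrix (Fin p) (Fin q) ℝ) :
    matC3 p q n B + 1 =
      (fromBlocks 1 B Bᵀ 1).submatrix (Sum.map id Prod.snd) (Sum.map id Prod.snd) := by
  ext (i | ⟨k, j⟩) (i' | ⟨k', j'⟩)
  · simp [matC3, one_apply]
  · simp [matC3]
  · simp [matC3]
  · by_cases hk : k = k' <;> simp [matC3, one_apply, hk]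

theorem rank_matC3_add_one_le (p q n : ℕ) (B : Matrix (Fin p) (Fin q) ℝ) :
    (matC3 p q n B + 1).rank ≤ p + q :=
  calc (matC3 p q n B + 1).rank
      ≤ (fromBlocks 1 B Bᵀ (1 : Matrix (Fin q) (Fin q) ℝ)).rank :=
        matC3_add_one_eq_submatrix p q n B ▸ rank_submatrix_le _ _ _
    _ ≤ p + q := (rank_le_card_width _).trans_eq (by simp)

theorem X_add_one_pow_dvd_charpoly_matC3 (p q n : ℕ) (B : Matrix (Fin p) (Fin q) ℝ) :
    (X + 1) ^ ((n - 1) * q) ∣ (matC3 p q n B).charpoly := by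
  have hdvd := (matC3 p q n B).X_sub_C_pow_card_sub_rank_dvd_charpoly (-1)
  simp only [map_neg, map_one, sub_neg_eq_add, Fintype.card_sum, Fintype.card_prod,
    Fintype.card_fin] at hdvd
  have hexp : (n - 1) * q ≤ p + n * q - (matC3 p q n B + 1).rank := by
    have hrank := rank_matC3_add_one_le p q n B
    rw [Nat.sub_one_mul]
    omega
  exact (pow_dvd_pow _ hexp).trans hdvd

theorem matD3_eq_matC3_transpose (p q n : ℕ) (B : Matrix (Fin p) (Fin q) ℝ) :
    matD3 p q n B = matC3 q p n Bᵀ := by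
  ext (j | ⟨k, i⟩) (j' | ⟨k', i'⟩) <;> rfl

theorem neg_one_eigenvalue_multiplicity_general (p q n : ℕ)
    (B : Matrix (Fin p) (Fin q) ℝ) :
    (Polynomial.X + 1) ^ ((n - 1) * q) ∣ (matC3 p q n B).charpoly ∧
      (Polynomial.X + 1) ^ ((n - 1) * p) ∣ (matD3 p q n B).charpoly :=
  ⟨X_add_one_pow_dvd_charpoly_matC3 p q n B,
    matD3_eq_matC3_transpose p q n B ▸ X_add_one_pow_dvd_charpoly_matC3 q p n Bᵀ⟩

/-- `C` has `−1` as an eigenvalue with algebraic multiplicity at least `(n−1)q`, and `D` has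
`−1` as an eigenvalue with algebraic multiplicity at least `(n−1)p`. -/
theorem neg_one_eigenvalue_multiplicity (p q n : ℕ) (hn : 1 ≤ n)
    (B : Matrix (Fin p) (Fin q) ℝ) :
    (Polynomial.X + 1) ^ ((n - 1) * q) ∣ (matC3 p q n B).charpoly ∧
      (Polynomial.X + 1) ^ ((n - 1) * p) ∣ (matD3 p q n B).charpoly :=
  neg_one_eigenvalue_multiplicity_general p q n B
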